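/- Let G be a word hyperbolic group with finite generating set A and H ≤ G a subgroup that is quasiconvex as a subset of Γ(G,A). Then H is finitely generated and the inclusion (H, d_B) ⊆ (G, d_A) is a quasi-isometric embedding for any finite generating set B of H. -/

import Mathlib

def evalWord {A G : Type} [Group G] (a : A → G) (w : List A) : G :=
  (w.map a).prod

noncomputable def wlen {A G : Type} [Group G] (a : A → G) (g : G) : ℕ :=
  sInf {n | ∃ w : List A, evalWord a w = g ∧ w.length = n}

noncomputable def wdist {A G : Type} [Group G] (a : A → G) (g h : G) : ℕ :=
  wlen a (g⁻¹ * h)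

noncomputable def wordLength {K : Type} [Group K] (S : Set K) (g : K) : ℕ :=
  sInf {n | ∃ w : List K, (∀ x ∈ w, x ∈ S) ∧ w.prod = g ∧ w.length = n}

def FourPointHyperbolic {A G : Type} [Group G] (a : A → G) (δ : ℝ) : Prop :=
  ∀ x y z w : G, (wdist a x y : ℝ) + wdist a z w ≤
    max ((wdist a x z : ℝ) + wdist a y w) ((wdist a x w : ℝ) + wdist a y z) + 2 * δ

/-!
Along a geodesic word `w` for `h ∈ H`, quasiconvexity provides elements `c k ∈ H` within `ε` of
each prefix `w.take k`, with `c 0 = 1` and `c |w| = h`. Each quotient `(c k)⁻¹ * c (k + 1)`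
lies in `H` and in the finite set `(wordBall a ε)⁻¹ * range a * wordBall a ε`, so `h` is a
product of `wlen a h` elements of a fixed finite subset of `H`. This yields finite generation
and `|h|_B ≤ K * |h|_A`; the bound `|h|_A ≤ M * |h|_B` is just the triangle inequality.
-/

open scoped Pointwise

section WordLength

variable {A G : Type} [Group G] (a : A → G)

lemma evalWord_append (w₁ w₂ : List A) :
    evalWord a (w₁ ++ w₂) = evalWord a w₁ * evalWord a w₂ := by
  simp [evalWord]

lemma evalWord_take_succ {w : List A} {k : ℕ} (hk : k < w.length) :
    evalWord a (w.take (k + 1)) = evalWord a (w.take k) * a w[k] := by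
  simp only [evalWord, List.map_take]
  rw [List.prod_take_succ _ _ (by simpa)]
  simp

lemma map_evalWord {G' : Type} [Group G'] (φ : G →* G') (w : List A) :
    φ (evalWord a w) = evalWord (φ ∘ a) w := by
  simp [evalWord, map_list_prod]

lemma wlen_le_length {w : List A} {g : G} (hw : evalWord a w = g) : wlen a g ≤ w.length :=
  Nat.sInf_le ⟨w, hw, rfl⟩

lemma exists_evalWord_eq_length_eq_wlen (hgen : ∀ g : G, ∃ w : List A, evalWord a w = g)
    (g : G) : ∃ w : List A, evalWord a w = g ∧ w.length = wlen a g :=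
  let ⟨w, hw⟩ := hgen g
  Nat.sInf_mem (s := {n | ∃ w : List A, evalWord a w = g ∧ w.length = n}) ⟨w.length, w, hw, rfl⟩

lemma wlen_one : wlen a (1 : G) = 0 :=
  Nat.le_zero.mp (wlen_le_length a (w := []) rfl)

lemma wlen_mul_le (hgen : ∀ g : G, ∃ w : List A, evalWord a w = g) (g h : G) :
    wlen a (g * h) ≤ wlen a g + wlen a h := by
  obtain ⟨w₁, rfl, hw₁⟩ := exists_evalWord_eq_length_eq_wlen a hgen g
  obtain ⟨w₂, rfl, hw₂⟩ := exists_evalWord_eq_length_eq_wlen a hgen h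
  simpa [hw₁, hw₂] using wlen_le_length a (evalWord_append a w₁ w₂)

lemma wlen_list_prod_le (hgen : ∀ g : G, ∃ w : List A, evalWord a w = g) {l : List G} {M : ℕ}
    (hl : ∀ x ∈ l, wlen a x ≤ M) : wlen a l.prod ≤ M * l.length := by
  induction l with
  | nil => simp [wlen_one]
  | cons x l ih =>
    simp only [List.mem_cons, forall_eq_or_imp] at hl
    calc wlen a (x :: l).prod ≤ wlen a x + wlen a l.prod := wlen_mul_le a hgen x l.prod
      _ ≤ M + M * l.length := add_le_add hl.1 (ih hl.2)
      _ = M * (x :: l).length := by simp [mul_add, add_comm]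

lemma wlen_map_le_mul_wlen {B G' : Type} [Group G'] (b : B → G') (φ : G' →* G)
    (hgen : ∀ g : G, ∃ w : List A, evalWord a w = g)
    (hgen' : ∀ g : G', ∃ w : List B, evalWord b w = g) {M : ℕ}
    (hM : ∀ y, wlen a (φ (b y)) ≤ M) (g : G') : wlen a (φ g) ≤ M * wlen b g := by
  obtain ⟨w, rfl, hw⟩ := exists_evalWord_eq_length_eq_wlen b hgen' g
  rw [← hw, map_evalWord, ← List.length_map (f := φ ∘ b)]
  exact wlen_list_prod_le a hgen (by simpa using fun y _ => hM y)

lemma exists_evalWord_eq_of_closure_range_eq_top (hinv : ∀ x : A, ∃ y : A, a y = (a x)⁻¹)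
    (hcl : Subgroup.closure (Set.range a) = ⊤) (g : G) : ∃ w : List A, evalWord a w = g := by
  have hg : g ∈ Subgroup.closure (Set.range a) := hcl ▸ Subgroup.mem_top g
  induction hg using Subgroup.closure_induction with
  | mem _ hx =>
    obtain ⟨x, rfl⟩ := hx
    exact ⟨[x], by simp [evalWord]⟩
  | one => exact ⟨[], rfl⟩
  | mul _ _ _ _ ih₁ ih₂ =>
    obtain ⟨w₁, rfl⟩ := ih₁
    obtain ⟨w₂, rfl⟩ := ih₂
    exact ⟨w₁ ++ w₂, evalWord_append a w₁ w₂⟩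
  | inv _ _ ih =>
    obtain ⟨w, rfl⟩ := ih
    choose ι hι using hinv
    exact ⟨(w.map ι).reverse, by simp [evalWord, List.prod_inv_reverse, Function.comp_def, hι]⟩

end WordLength

lemma wordLength_eq_wlen {K : Type} [Group K] (S : Set K) (g : K) :
    wordLength S g = wlen (Subtype.val : S → K) g := by
  unfold wordLength wlen evalWord
  congr 1
  ext n
  constructor
  · rintro ⟨w, hS, rfl, rfl⟩
    lift w to List S using hS
    exact ⟨w, rfl, by simp⟩
  · rintro ⟨w, rfl, rfl⟩
    refine ⟨w.map Subtype.val, fun x hx => ?_, rfl, by simp⟩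
    obtain ⟨y, -, rfl⟩ := List.mem_map.mp hx
    exact y.2

section Quasiconvex

variable {A G : Type} [Group G] (a : A → G)

def IsQuasiconvex (H : Subgroup G) (ε : ℝ) : Prop :=
  ∀ h : G, h ∈ H → ∀ w : List A, evalWord a w = h → w.length = wlen a h →
    ∀ p : List A, p <+: w → ∃ u : List A, (u.length : ℝ) ≤ ε ∧ evalWord a p * evalWord a u ∈ H

def wordBall (r : ℝ) : Set G :=
  evalWord a '' {u | (u.length : ℝ) ≤ r}

lemma wordBall_finite [Finite A] (r : ℝ) : (wordBall a r).Finite :=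
  ((List.finite_length_le A ⌈r⌉₊).subset fun _ hu =>
    Nat.cast_le.mp (hu.trans (Nat.le_ceil r))).image _

lemma one_mem_wordBall {r : ℝ} (hr : 0 ≤ r) : (1 : G) ∈ wordBall a r :=
  ⟨[], by simpa using hr, rfl⟩

variable {a} {H : Subgroup G} {ε : ℝ}

lemma IsQuasiconvex.exists_mem_near_prefix (hqc : IsQuasiconvex a H ε) (hε : 0 ≤ ε)
    {w : List A} {h : H} (hw : evalWord a w = h) (hgeo : w.length = wlen a (h : G)) (k : ℕ) :
    ∃ c : H, (evalWord a (w.take k))⁻¹ * c ∈ wordBall a ε ∧ (k = 0 → c = 1) ∧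
      (k = w.length → c = h) := by
  by_cases hk₀ : k = 0
  · subst hk₀
    refine ⟨1, by simpa [evalWord] using one_mem_wordBall a hε, fun _ => rfl, fun hw₀ => ?_⟩
    ext
    rw [← hw, List.eq_nil_of_length_eq_zero hw₀.symm]
    rfl
  by_cases hkn : k = w.length
  · subst hkn
    exact ⟨h, by simpa [hw] using one_mem_wordBall a hε, (absurd · hk₀), fun _ => rfl⟩
  obtain ⟨u, hu, hmem⟩ := hqc h h.2 w hw hgeo (w.take k) (List.take_prefix k w)
  exact ⟨⟨_, hmem⟩, by simpa using ⟨u, hu, rfl⟩, (absurd · hk₀), (absurd · hkn)⟩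

theorem IsQuasiconvex.exists_list_prod_eq (hqc : IsQuasiconvex a H ε) (hε : 0 ≤ ε)
    (hgen : ∀ g : G, ∃ w : List A, evalWord a w = g) (h : H) :
    ∃ l : List H, (∀ x ∈ l, (x : G) ∈ (wordBall a ε)⁻¹ * Set.range a * wordBall a ε) ∧
      l.prod = h ∧ l.length = wlen a (h : G) := by
  obtain ⟨w, hw, hgeo⟩ := exists_evalWord_eq_length_eq_wlen a hgen (h : G)
  choose c hc hc₀ hcn using hqc.exists_mem_near_prefix hε hw hgeo
  refine ⟨(List.range w.length).map fun k => (c k)⁻¹ / (c (k + 1))⁻¹, ?_, ?_, by simp [hgeo]⟩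
  · simp only [List.mem_map, List.mem_range, forall_exists_index, and_imp]
    rintro _ k hk rfl
    have := Set.mul_mem_mul (Set.mul_mem_mul (Set.inv_mem_inv.mpr (hc k))
      (Set.mem_range_self (f := a) w[k])) (hc (k + 1))
    convert this using 1
    rw [evalWord_take_succ a hk]
    push_cast
    rw [div_inv_eq_mul]
    group
  · rw [List.prod_range_div', hc₀ 0 rfl, hcn _ rfl]
    simp

end Quasiconvex

lemma Subgroup.fg_of_forall_exists_list_prod {G : Type*} [Group G] {H : Subgroup G} {T : Set G}
    (hT : T.Finite) (hH : ∀ h : H, ∃ l : List H, (∀ x ∈ l, (x : G) ∈ T) ∧ l.prod = h) :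
    H.FG := by
  rw [← Group.fg_iff_subgroup_fg, Group.fg_iff]
  refine ⟨Subtype.val ⁻¹' T, eq_top_iff.mpr fun h _ => ?_, hT.preimage Subtype.val_injective.injOn⟩
  obtain ⟨l, hl, rfl⟩ := hH h
  exact Subgroup.list_prod_mem _ fun x hx => Subgroup.subset_closure (hl x hx)

lemma div_sub_le_and_le_mul_add {x y M K : ℕ} (hx : x ≤ M * y) (hy : y ≤ K * x) :
    (y : ℝ) / (M + K + 1) - (M + K + 1) ≤ x ∧ (x : ℝ) ≤ (M + K + 1) * y + (M + K + 1) := by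
  have hx' : (x : ℝ) ≤ M * y := by exact_mod_cast hx
  have hy' : (y : ℝ) ≤ K * x := by exact_mod_cast hy
  constructor
  · rw [sub_le_iff_le_add, div_le_iff₀ (by positivity)]
    nlinarith [(x.cast_nonneg : (0 : ℝ) ≤ x), (M.cast_nonneg : (0 : ℝ) ≤ M)]
  · nlinarith [(y.cast_nonneg : (0 : ℝ) ≤ y), (K.cast_nonneg : (0 : ℝ) ≤ K)]

theorem fg_and_qi_embedded_of_quasiconvex_general
    {A G : Type} [Fintype A] [Group G] (a : A → G)
    (hgen : ∀ g : G, ∃ w : List A, evalWord a w = g)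
    (H : Subgroup G)
    (hqc : ∃ ε : ℝ, 0 < ε ∧ ∀ h : G, h ∈ H → ∀ w : List A, evalWord a w = h →
      w.length = wlen a h → ∀ p : List A, p <+: w →
        ∃ u : List A, (u.length : ℝ) ≤ ε ∧ evalWord a p * evalWord a u ∈ H) :
    H.FG ∧ ∀ B : Set H, B.Finite → (∀ x ∈ B, x⁻¹ ∈ B) → Subgroup.closure B = ⊤ →
      ∃ C : ℝ, 0 < C ∧ ∀ h : H, (wordLength B h : ℝ) / C - C ≤ wlen a (h : G) ∧
        (wlen a (h : G) : ℝ) ≤ C * wordLength B h + C := by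
  obtain ⟨ε, hε, hqc⟩ := hqc
  have hdecomp := IsQuasiconvex.exists_list_prod_eq hqc hε.le hgen
  have hT : ((wordBall a ε)⁻¹ * Set.range a * wordBall a ε).Finite :=
    ((wordBall_finite a ε).inv.mul (Set.finite_range a)).mul (wordBall_finite a ε)
  refine ⟨Subgroup.fg_of_forall_exists_list_prod hT fun h => ?_, fun B hB hBinv hBgen => ?_⟩
  · obtain ⟨l, hlT, hl, -⟩ := hdecomp h
    exact ⟨l, hlT, hl⟩
  have hgenB := exists_evalWord_eq_of_closure_range_eq_top (Subtype.val : B → H)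
    (fun x => ⟨⟨_, hBinv x x.2⟩, rfl⟩) (by rwa [Subtype.range_coe])
  obtain ⟨M, hM⟩ := (hB.image fun y : H => wlen a (y : G)).bddAbove
  obtain ⟨K, hK⟩ :=
    ((hT.preimage Subtype.val_injective.injOn).image (wlen (Subtype.val : B → H))).bddAbove
  refine ⟨M + K + 1, by positivity, fun h => ?_⟩
  rw [wordLength_eq_wlen]
  refine div_sub_le_and_le_mul_add
    (wlen_map_le_mul_wlen a _ H.subtype hgen hgenB (fun y => hM ⟨y, y.2, rfl⟩) h) ?_
  obtain ⟨l, hlT, rfl, hlen⟩ := hdecomp h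
  rw [← hlen]
  exact wlen_list_prod_le _ hgenB fun x hx => hK ⟨x, hlT x hx, rfl⟩

/-- In a word hyperbolic group, a subgroup that is quasiconvex as a subset of the Cayley
graph is finitely generated and quasi-isometrically embedded for any finite generating set. -/
theorem fg_and_qi_embedded_of_quasiconvex
    {A G : Type} [Fintype A] [Group G] (a : A → G)
    (hinv : ∀ x : A, ∃ y : A, a y = (a x)⁻¹)
    (hgen : ∀ g : G, ∃ w : List A, evalWord a w = g)
    (δ : ℝ) (hδ : 0 ≤ δ) (hhyp : FourPointHyperbolic a δ)
    (H : Subgroup G)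
    (hqc : ∃ ε : ℝ, 0 < ε ∧ ∀ h : G, h ∈ H → ∀ w : List A, evalWord a w = h →
      w.length = wlen a h → ∀ p : List A, p <+: w →
        ∃ u : List A, (u.length : ℝ) ≤ ε ∧ evalWord a p * evalWord a u ∈ H) :
    H.FG ∧ ∀ B : Set H, B.Finite → (∀ x ∈ B, x⁻¹ ∈ B) → Subgroup.closure B = ⊤ →
      ∃ C : ℝ, 0 < C ∧ ∀ h : H, (wordLength B h : ℝ) / C - C ≤ wlen a (h : G) ∧
        (wlen a (h : G) : ℝ) ≤ C * wordLength B h + C :=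
  fg_and_qi_embedded_of_quasiconvex_general a hgen H hqc
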